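/- arXiv:1404.7665 — 7 statements merged into one kernel-verified Lean document; each statement's English description precedes it below -/
import Mathlib

section
/- Let V be a finite set, k an integer with 1 ≤ k ≤ |V|, and f : 2^V → ℝ a submodular and monotone increasing set function. Let S_0 = ∅ and, for i = 0, …, k−1, let S_{i+1} = S_i ∪ {a_i} where a_i ∈ V ∖ S_i maximizes the marginal gain f(S_i ∪ {a}) − f(S_i) over all a ∈ V ∖ S_i. Let f* = max { f(S) : S ⊆ V, |S| = k }. Then f* − f(S_k) ≤ ((k−1)/k)^k · (f* − f(∅)) ≤ (1/e) · (f* − f(∅)). -/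
/-- Greedy approximation guarantee of Nemhauser–Wolsey–Fisher: if `f` is submodular and
monotone increasing, the greedy algorithm choosing `k` elements achieves
`f* − f(S_k) ≤ ((k−1)/k)^k (f* − f(∅)) ≤ (1/e)(f* − f(∅))`, where `f*` is the maximum of
`f` over all subsets of cardinality `k`. -/
theorem greedy_bound
    {V : Type*} [Fintype V] [DecidableEq V] (f : Finset V → ℝ) (k : ℕ)
    (hk₁ : 1 ≤ k) (hk₂ : k ≤ Fintype.card V)
    -- f is submodular:
    (hsub : ∀ A B : Finset V, A ⊆ B → ∀ s : V, s ∉ B →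
      f (insert s A) - f A ≥ f (insert s B) - f B)
    -- f is monotone increasing:
    (hmono : ∀ A B : Finset V, A ⊆ B → f A ≤ f B)
    -- the greedy sequence S_0 = ∅, S_{i+1} = S_i ∪ {a_i}:
    (S : ℕ → Finset V) (a : ℕ → V)
    (hS0 : S 0 = ∅)
    (ha : ∀ i < k, a i ∉ S i ∧
      (∀ b : V, b ∉ S i → f (insert b (S i)) - f (S i) ≤ f (insert (a i) (S i)) - f (S i)) ∧
      S (i + 1) = insert (a i) (S i))
    -- f* is the maximum of f over subsets of cardinality k:
    (fstar : ℝ)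
    (hfstar : IsGreatest {x : ℝ | ∃ T : Finset V, T.card = k ∧ f T = x} fstar) :
    fstar - f (S k) ≤ ((k - 1 : ℝ) / k) ^ k * (fstar - f ∅) ∧
    ((k - 1 : ℝ) / k) ^ k * (fstar - f ∅) ≤ (1 / Real.exp 1) * (fstar - f ∅) := by
  have hk0 : (0:ℝ) < k := by exact_mod_cast hk₁
  have hk1 : (1:ℝ) ≤ k := by exact_mod_cast hk₁
  obtain ⟨T, hTcard, hTf⟩ := hfstar.1
  have hf0 : f ∅ ≤ fstar := hTf ▸ hmono ∅ T (Finset.empty_subset T)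
  have hq0 : (0:ℝ) ≤ ((k:ℝ) - 1) / k := by
    apply div_nonneg <;> linarith
  -- submodular sum lemma
  have sumlem : ∀ (D B : Finset V), Disjoint D B →
      f (D ∪ B) - f B ≤ ∑ t ∈ D, (f (insert t B) - f B) := by
    intro D
    induction D using Finset.induction_on with
    | empty => intro B _; simp
    | @insert s D hsD ih =>
      intro B hdisj
      have hdisj' : Disjoint D B := by
        exact (Finset.disjoint_insert_left.mp hdisj).2
      have hsB : s ∉ B := (Finset.disjoint_insert_left.mp hdisj).1
      have hsDB : s ∉ D ∪ B := by simp [hsD, hsB]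
      have h1 : f (insert s (D ∪ B)) - f (D ∪ B) ≤ f (insert s B) - f B :=
        hsub B (D ∪ B) Finset.subset_union_right s hsDB
      have h2 := ih B hdisj'
      rw [Finset.insert_union, Finset.sum_insert hsD]
      linarith
  -- main step
  have step : ∀ i < k, fstar - f (S (i+1)) ≤ (((k:ℝ) - 1) / k) * (fstar - f (S i)) := by
    intro i hi
    obtain ⟨haS, hmax, hSsucc⟩ := ha i hi
    set B := S i with hB
    have hgain : 0 ≤ f (insert (a i) B) - f B := by
      have := hmono B (insert (a i) B) (Finset.subset_insert _ _)
      linarith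
    have key : fstar - f B ≤ (k:ℝ) * (f (insert (a i) B) - f B) := by
      have h1 : fstar - f B ≤ f (T ∪ B) - f B := by
        have := hmono T (T ∪ B) Finset.subset_union_left
        linarith [hTf ▸ this]
      have h2 : f ((T \ B) ∪ B) - f B ≤ ∑ t ∈ T \ B, (f (insert t B) - f B) :=
        sumlem (T \ B) B (Finset.sdiff_disjoint)
      rw [Finset.sdiff_union_self_eq_union] at h2
      have h3 : ∑ t ∈ T \ B, (f (insert t B) - f B) ≤
          (T \ B).card • (f (insert (a i) B) - f B) := by
        apply Finset.sum_le_card_nsmul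
        intro t ht
        exact hmax t (Finset.mem_sdiff.mp ht).2
      have h4 : ((T \ B).card : ℝ) ≤ (k:ℝ) := by
        have : (T \ B).card ≤ T.card := Finset.card_le_card (Finset.sdiff_subset)
        exact_mod_cast hTcard ▸ this
      have h5 : (T \ B).card • (f (insert (a i) B) - f B) ≤
          (k:ℝ) * (f (insert (a i) B) - f B) := by
        rw [nsmul_eq_mul]
        exact mul_le_mul_of_nonneg_right h4 hgain
      linarith
    rw [hSsucc]
    have hdiv : (fstar - f B) / k ≤ f (insert (a i) B) - f B := by
      rw [div_le_iff₀ hk0]; linarith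
    have heq : ((k:ℝ) - 1) / k * (fstar - f B) = (fstar - f B) - (fstar - f B) / k := by
      field_simp
    linarith
  -- induction
  have main : ∀ i ≤ k, fstar - f (S i) ≤ (((k:ℝ) - 1) / k) ^ i * (fstar - f ∅) := by
    intro i hi
    induction i with
    | zero => simp [hS0]
    | succ n ihn =>
      have hn : n < k := hi
      have h1 := step n hn
      have h2 := ihn (le_of_lt hn)
      calc fstar - f (S (n+1)) ≤ (((k:ℝ) - 1) / k) * (fstar - f (S n)) := h1
        _ ≤ (((k:ℝ) - 1) / k) * ((((k:ℝ) - 1) / k) ^ n * (fstar - f ∅)) :=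
            mul_le_mul_of_nonneg_left h2 hq0
        _ = (((k:ℝ) - 1) / k) ^ (n+1) * (fstar - f ∅) := by ring
  constructor
  · exact main k le_rfl
  · have hr : ((k:ℝ) - 1) / k = 1 - 1 / k := by
      rw [sub_div, div_self hk0.ne']
    have h1 : (1:ℝ) - 1 / k ≤ Real.exp (-(1 / k)) := by
      have := Real.add_one_le_exp (-(1 / (k:ℝ)))
      linarith
    have hnn : (0:ℝ) ≤ 1 - 1 / k := by rw [← hr]; exact hq0
    have hp : ((1:ℝ) - 1 / k) ^ k ≤ Real.exp (-(1 / k)) ^ k :=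
      pow_le_pow_left₀ hnn h1 k
    have he : Real.exp (-(1 / (k:ℝ))) ^ k = Real.exp (-1) := by
      rw [← Real.exp_nat_mul]
      congr 1
      field_simp
    have : (((k:ℝ) - 1) / k) ^ k ≤ 1 / Real.exp 1 := by
      calc (((k:ℝ) - 1) / k) ^ k = ((1:ℝ) - 1 / k) ^ k := by rw [hr]
        _ ≤ Real.exp (-(1 / k)) ^ k := hp
        _ = Real.exp (-1) := he
        _ = 1 / Real.exp 1 := by rw [Real.exp_neg, one_div]
    exact mul_le_mul_of_nonneg_right this (by linarith)
end

section
/- Let A ∈ ℝ^{n×n}, T > 0, B₀ ∈ ℝ^{n×m₀} a (possibly zero) existing input matrix, C ∈ ℝ^{p×n}, and let V = {b_1, …, b_M} be a finite set of vectors in ℝ^n (possible input matrix columns). For S ⊆ V define the finite-horizon controllability Gramian W_S = ∫_0^T e^{Aτ} (B₀B₀ᵀ + Σ_{s∈S} b_s b_sᵀ) e^{Aᵀτ} dτ. Then the set function f : 2^V → ℝ defined by f(S) = tr(C W_S Cᵀ) is modular: for all subsets S ⊆ V, f(S) = f(∅) + Σ_{s∈S} tr(C W̃_s Cᵀ), where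 W̃_s = ∫_0^T e^{Aτ} b_s b_sᵀ e^{Aᵀτ} dτ, and consequently f(A') + f(B') = f(A' ∪ B') + f(A' ∩ B') for all A', B' ⊆ V. -/
/-!
The Gramian depends linearly on the input weight `B Bᵀ = B₀ B₀ᵀ + ∑_{s ∈ S} b_s b_sᵀ`, and so does
`W ↦ tr (C W Cᵀ)`. Hence `f S = f ∅ + ∑_{s ∈ S} tr (C W̃_s Cᵀ)`, and any set function of this shape
is modular because `∑_{A'} + ∑_{B'} = ∑_{A' ∪ B'} + ∑_{A' ∩ B'}`.
-/

open Matrix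

theorem Matrix.continuous_exp_smul {ι 𝕜 : Type*} [Fintype ι] [DecidableEq ι] [RCLike 𝕜]
    (A : Matrix ι ι 𝕜) :
    Continuous fun τ : ℝ => NormedSpace.exp (τ • A) := by
  -- any matrix norm will do: all of them induce the product topology
  let _ : NormedRing (Matrix ι ι 𝕜) := Matrix.linftyOpNormedRing
  let _ : NormedAlgebra ℝ (Matrix ι ι 𝕜) := Matrix.linftyOpNormedAlgebra
  let _ : NormedAlgebra ℚ (Matrix ι ι 𝕜) := Matrix.linftyOpNormedAlgebra
  exact NormedSpace.exp_continuous.comp (continuous_id.smul continuous_const)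

/-- `controllabilityGramian A T (B * Bᵀ)` is the Gramian `W(T)` of the pair `(A, B)`. -/
noncomputable def controllabilityGramian {ι : Type*} [Fintype ι] [DecidableEq ι]
    (A : Matrix ι ι ℝ) (T : ℝ) :
    Matrix ι ι ℝ →ₗ[ℝ] Matrix ι ι ℝ where
  toFun Q := of fun i j => ∫ τ in (0 : ℝ)..T,
    (NormedSpace.exp (τ • A) * Q * NormedSpace.exp (τ • Aᵀ)) i j
  map_add' Q R := by
    have hintegrable : ∀ Q : Matrix ι ι ℝ, ∀ i j, IntervalIntegrable
        (fun τ : ℝ => (NormedSpace.exp (τ • A) * Q * NormedSpace.exp (τ • Aᵀ)) i j)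
        MeasureTheory.volume 0 T := fun Q i j =>
      ((((continuous_exp_smul A).matrix_mul continuous_const).matrix_mul
        (continuous_exp_smul Aᵀ)).matrix_elem i j).intervalIntegrable _ _
    ext i j
    simp only [Matrix.mul_add, Matrix.add_mul, Matrix.add_apply, of_apply]
    exact intervalIntegral.integral_add (hintegrable Q i j) (hintegrable R i j)
  map_smul' c Q := by
    ext i j
    simp only [Matrix.mul_smul, Matrix.smul_mul, Matrix.smul_apply, of_apply, smul_eq_mul,
      RingHom.id_apply]
    exact intervalIntegral.integral_const_mul c _

theorem Finset.modular_of_eq_add_sum {ι R : Type*} [DecidableEq ι] [AddCommMonoid R]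
    (f : Finset ι → R) (g : ι → R) (hf : ∀ S, f S = f ∅ + ∑ s ∈ S, g s) (S S' : Finset ι) :
    f S + f S' = f (S ∪ S') + f (S ∩ S') := by
  rw [hf S, hf S', hf (S ∪ S'), hf (S ∩ S'), add_add_add_comm, add_add_add_comm _ _ (f ∅),
    sum_union_inter]

theorem trace_gramian_modular_general
    {n m₀ p M : ℕ}
    (A : Matrix (Fin n) (Fin n) ℝ) (T : ℝ)
    (B₀ : Matrix (Fin n) (Fin m₀) ℝ) (C : Matrix (Fin p) (Fin n) ℝ)
    (b : Fin M → (Fin n → ℝ))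
    -- W S is the finite-horizon controllability Gramian for input matrix [B₀, b_s (s ∈ S)]:
    (W : Finset (Fin M) → Matrix (Fin n) (Fin n) ℝ)
    (hW : ∀ (S : Finset (Fin M)) (i j : Fin n),
      W S i j = ∫ τ in (0:ℝ)..T,
        (NormedSpace.exp (τ • A) *
          (B₀ * B₀ᵀ + ∑ s ∈ S, vecMulVec (b s) (b s)) *
          NormedSpace.exp (τ • Aᵀ)) i j)
    -- W̃ s is the Gramian associated with the single column b_s:
    (Wtil : Fin M → Matrix (Fin n) (Fin n) ℝ)
    (hWtil : ∀ (s : Fin M) (i j : Fin n),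
      Wtil s i j = ∫ τ in (0:ℝ)..T,
        (NormedSpace.exp (τ • A) * vecMulVec (b s) (b s) *
          NormedSpace.exp (τ • Aᵀ)) i j) :
    (∀ S : Finset (Fin M),
       (C * W S * Cᵀ).trace = (C * W ∅ * Cᵀ).trace + ∑ s ∈ S, (C * Wtil s * Cᵀ).trace) ∧
    (∀ A' B' : Finset (Fin M),
       (C * W A' * Cᵀ).trace + (C * W B' * Cᵀ).trace =
       (C * W (A' ∪ B') * Cᵀ).trace + (C * W (A' ∩ B') * Cᵀ).trace) := by
  have hW' : ∀ S,
      W S = controllabilityGramian A T (B₀ * B₀ᵀ + ∑ s ∈ S, vecMulVec (b s) (b s)) :=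
    fun S => ext (hW S)
  have hWtil' : ∀ s, Wtil s = controllabilityGramian A T (vecMulVec (b s) (b s)) :=
    fun s => ext (hWtil s)
  have hsplit : ∀ S, W S = W ∅ + ∑ s ∈ S, Wtil s := fun S => by
    rw [hW' S, hW' ∅, Finset.sum_empty, add_zero, map_add, map_sum]
    simp only [hWtil']
  have htrace : ∀ S : Finset (Fin M),
      (C * W S * Cᵀ).trace = (C * W ∅ * Cᵀ).trace + ∑ s ∈ S, (C * Wtil s * Cᵀ).trace :=
    fun S => by
      rw [hsplit S]
      simp only [Matrix.mul_add, Matrix.add_mul, Matrix.mul_sum, Matrix.sum_mul, trace_add,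
        trace_sum]
  exact ⟨htrace, Finset.modular_of_eq_add_sum _ _ htrace⟩

/-- The weighted trace of the finite-horizon controllability Gramian is a modular set
function of the chosen set of input-matrix columns:
`f(S) = f(∅) + ∑_{s ∈ S} tr(C W̃_s Cᵀ)`, and hence
`f(A') + f(B') = f(A' ∪ B') + f(A' ∩ B')`. -/
theorem trace_gramian_modular
    {n m₀ p M : ℕ}
    (A : Matrix (Fin n) (Fin n) ℝ) (T : ℝ) (hT : 0 < T)
    (B₀ : Matrix (Fin n) (Fin m₀) ℝ) (C : Matrix (Fin p) (Fin n) ℝ)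
    (b : Fin M → (Fin n → ℝ))
    -- W S is the finite-horizon controllability Gramian for input matrix [B₀, b_s (s ∈ S)]:
    (W : Finset (Fin M) → Matrix (Fin n) (Fin n) ℝ)
    (hW : ∀ (S : Finset (Fin M)) (i j : Fin n),
      W S i j = ∫ τ in (0:ℝ)..T,
        (NormedSpace.exp (τ • A) *
          (B₀ * B₀ᵀ + ∑ s ∈ S, vecMulVec (b s) (b s)) *
          NormedSpace.exp (τ • Aᵀ)) i j)
    -- W̃ s is the Gramian associated with the single column b_s:
    (Wtil : Fin M → Matrix (Fin n) (Fin n) ℝ)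
    (hWtil : ∀ (s : Fin M) (i j : Fin n),
      Wtil s i j = ∫ τ in (0:ℝ)..T,
        (NormedSpace.exp (τ • A) * vecMulVec (b s) (b s) *
          NormedSpace.exp (τ • Aᵀ)) i j) :
    (∀ S : Finset (Fin M),
       (C * W S * Cᵀ).trace = (C * W ∅ * Cᵀ).trace + ∑ s ∈ S, (C * Wtil s * Cᵀ).trace) ∧
    (∀ A' B' : Finset (Fin M),
       (C * W A' * Cᵀ).trace + (C * W B' * Cᵀ).trace =
       (C * W (A' ∪ B') * Cᵀ).trace + (C * W (A' ∩ B') * Cᵀ).trace) :=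
  trace_gramian_modular_general A T B₀ C b W hW Wtil hWtil
end

section
/- Let V be a finite set, let W₀ be an n×n real symmetric positive definite matrix, and for each s ∈ V let W_s be an n×n real symmetric positive semidefinite matrix. For S ⊆ V define W_S = W₀ + Σ_{s∈S} W_s. Then the set function f : 2^V → ℝ defined by f(S) = log det(W_S) is submodular and monotone increasing. -/
/-!
Writing `M + P = M + √P √P`, the matrix determinant lemma gives
`det (M + P) = det M · det (1 + √P M⁻¹ √P)`. The second factor is at least `1`, which gives
monotonicity, and it decreases as `M` grows in the Loewner order because `M ↦ M⁻¹` is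
operator antitone, which gives submodularity.
-/

open Matrix
open scoped ComplexOrder MatrixOrder

namespace Matrix

variable {ι : Type*} [Fintype ι] [DecidableEq ι]

theorem PosSemidef.one_le_det_one_add {R : Matrix ι ι ℝ} (hR : R.PosSemidef) :
    1 ≤ (1 + R).det := by
  have hdiag : 1 + R = Unitary.conjStarAlgAut ℝ _ hR.1.eigenvectorUnitary
      (diagonal (1 + hR.1.eigenvalues)) := by
    conv_lhs => rw [hR.1.spectral_theorem, ← map_one (Unitary.conjStarAlgAut ℝ _ _), ← map_add,
      ← diagonal_one, diagonal_add]
    rfl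
  rw [hdiag, Unitary.conjStarAlgAut_apply, det_mul_comm, ← Matrix.mul_assoc,
    Unitary.coe_star_mul_self, one_mul, det_diagonal]
  exact Finset.one_le_prod fun i _ => le_add_of_nonneg_right (hR.eigenvalues_nonneg i)

omit [Fintype ι] [DecidableEq ι] in
theorem PosDef.of_le {𝕜 : Type*} [RCLike 𝕜] {M N : Matrix ι ι 𝕜} (hM : M.PosDef)
    (hMN : M ≤ N) : N.PosDef := by
  simpa using hM.add_posSemidef hMN

theorem PosDef.inv_anti {𝕜 : Type*} [RCLike 𝕜] {M N : Matrix ι ι 𝕜} (hM : M.PosDef)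
    (hMN : M ≤ N) : N⁻¹ ≤ M⁻¹ := by
  -- both Schur complements of `fromBlocks N 1 1 M⁻¹` decide its positive semidefiniteness
  have hN := hM.of_le hMN
  have := hN.isUnit.invertible
  have := hM.isUnit.invertible
  have := hM.inv.isUnit.invertible
  have h₁₁ := PosDef.fromBlocks₁₁ (1 : Matrix ι ι 𝕜) M⁻¹ hN
  have h₂₂ := PosDef.fromBlocks₂₂ N (1 : Matrix ι ι 𝕜) hM.inv
  simp only [conjTranspose_one, Matrix.mul_one, Matrix.one_mul, inv_inv_of_invertible]
    at h₁₁ h₂₂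
  exact h₁₁.mp (h₂₂.mpr (le_iff.mp hMN))

theorem PosDef.det_add_eq_det_mul_det_one_add_sqrt {M P : Matrix ι ι ℝ} (hM : M.PosDef)
    (hP : P.PosSemidef) :
    (M + P).det = M.det * (1 + CFC.sqrt P * M⁻¹ * CFC.sqrt P).det := by
  conv_lhs => rw [← CFC.sqrt_mul_sqrt_self P hP.nonneg]
  exact det_add_mul _ _ hM.det_pos.ne'.isUnit

theorem PosDef.det_le_det_of_le {M N : Matrix ι ι ℝ} (hM : M.PosDef) (hMN : M ≤ N) :
    M.det ≤ N.det := by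
  rw [← add_sub_cancel M N, hM.det_add_eq_det_mul_det_one_add_sqrt hMN]
  refine le_mul_of_one_le_right hM.det_pos.le (PosSemidef.one_le_det_one_add ?_)
  exact (conjugate_nonneg_of_nonneg hM.inv.posSemidef.nonneg (CFC.sqrt_nonneg _)).posSemidef

theorem PosDef.det_add_mul_det_le_of_le {M N P : Matrix ι ι ℝ} (hM : M.PosDef) (hMN : M ≤ N)
    (hP : P.PosSemidef) : (N + P).det * M.det ≤ (M + P).det * N.det := by
  have hN := hM.of_le hMN
  have hconj : (CFC.sqrt P * N⁻¹ * CFC.sqrt P).PosSemidef :=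
    (conjugate_nonneg_of_nonneg hN.inv.posSemidef.nonneg (CFC.sqrt_nonneg _)).posSemidef
  have hfactor : (1 + CFC.sqrt P * N⁻¹ * CFC.sqrt P).det ≤
      (1 + CFC.sqrt P * M⁻¹ * CFC.sqrt P).det :=
    (PosDef.one.add_posSemidef hconj).det_le_det_of_le <| add_le_add_right
      (conjugate_le_conjugate_of_nonneg (hM.inv_anti hMN) (CFC.sqrt_nonneg _)) 1
  rw [hN.det_add_eq_det_mul_det_one_add_sqrt hP, hM.det_add_eq_det_mul_det_one_add_sqrt hP]
  linarith [mul_le_mul_of_nonneg_left hfactor (mul_pos hN.det_pos hM.det_pos).le]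

theorem PosDef.log_det_add_sub_log_det_le_of_le {M N P : Matrix ι ι ℝ} (hM : M.PosDef)
    (hMN : M ≤ N) (hP : P.PosSemidef) :
    Real.log (N + P).det - Real.log N.det ≤ Real.log (M + P).det - Real.log M.det := by
  have hN := hM.of_le hMN
  have h := Real.log_le_log (mul_pos (hN.add_posSemidef hP).det_pos hM.det_pos)
    (hM.det_add_mul_det_le_of_le hMN hP)
  rw [Real.log_mul (hN.add_posSemidef hP).det_pos.ne' hM.det_pos.ne',
    Real.log_mul (hM.add_posSemidef hP).det_pos.ne' hN.det_pos.ne'] at h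
  linarith

end Matrix

theorem logdet_gramian_submodular_monotone_general
    {V : Type*} [DecidableEq V] {n : ℕ}
    (W₀ : Matrix (Fin n) (Fin n) ℝ) (hW₀ : W₀.PosDef)
    (W : V → Matrix (Fin n) (Fin n) ℝ) (hW : ∀ s : V, (W s).PosSemidef)
    (f : Finset V → ℝ)
    (hf : ∀ S : Finset V, f S = Real.log (W₀ + ∑ s ∈ S, W s).det) :
    (∀ A B : Finset V, A ⊆ B → ∀ s : V, s ∉ B →
      f (insert s A) - f A ≥ f (insert s B) - f B) ∧
    (∀ A B : Finset V, A ⊆ B → f A ≤ f B) := by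
  set G : Finset V → Matrix (Fin n) (Fin n) ℝ := fun S => W₀ + ∑ s ∈ S, W s
  have hG_posDef (S : Finset V) : (G S).PosDef :=
    hW₀.add_posSemidef (posSemidef_sum S fun s _ => hW s)
  have hG_mono {A B : Finset V} (hAB : A ⊆ B) : G A ≤ G B :=
    add_le_add_right (Finset.sum_le_sum_of_subset_of_nonneg hAB fun s _ _ => (hW s).nonneg) W₀
  have hG_insert {S : Finset V} {s : V} (hs : s ∉ S) : G (insert s S) = G S + W s := by
    simp only [G, Finset.sum_insert hs, add_comm (W s), add_assoc]
  have hfG (S : Finset V) : f S = Real.log (G S).det := hf S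
  refine ⟨fun A B hAB s hsB => ?_, fun A B hAB => ?_⟩
  · rw [hfG, hfG, hfG, hfG, hG_insert hsB, hG_insert fun hsA => hsB (hAB hsA)]
    exact (hG_posDef A).log_det_add_sub_log_det_le_of_le (hG_mono hAB) (hW s)
  · rw [hfG, hfG]
    exact Real.log_le_log (hG_posDef A).det_pos ((hG_posDef A).det_le_det_of_le (hG_mono hAB))

/-- The log determinant of the controllability Gramian `W_S = W₀ + ∑_{s ∈ S} W_s`
is a submodular and monotone increasing set function of the actuator set `S`. -/
theorem logdet_gramian_submodular_monotone
    {V : Type*} [Fintype V] [DecidableEq V] {n : ℕ}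
    (W₀ : Matrix (Fin n) (Fin n) ℝ) (hW₀ : W₀.PosDef)
    (W : V → Matrix (Fin n) (Fin n) ℝ) (hW : ∀ s : V, (W s).PosSemidef)
    (f : Finset V → ℝ)
    (hf : ∀ S : Finset V, f S = Real.log (W₀ + ∑ s ∈ S, W s).det) :
    (∀ A B : Finset V, A ⊆ B → ∀ s : V, s ∉ B →
      f (insert s A) - f A ≥ f (insert s B) - f B) ∧
    (∀ A B : Finset V, A ⊆ B → f A ≤ f B) :=
  logdet_gramian_submodular_monotone_general W₀ hW₀ W hW f hf
end

section
/- Let W₁, W₂ be n×n real symmetric positive definite matrices with W₁ ⪯ W₂ (i.e., W₂ − W₁ positive semidefinite), and let W_a be an n×n real symmetric positive semidefinite matrix. Then log det(W₂ + W_a) − log det(W₂) ≤ log det(W₁ + W_a) − log det(W₁). -/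
/-!
For positive definite `W` and `S = √W_a`, the matrix determinant lemma gives
`det (W + W_a) / det W = det (1 + S W⁻¹ S)`. Inversion reverses the Loewner order, so
`1 + S W₂⁻¹ S ⪯ 1 + S W₁⁻¹ S`, and the determinant is monotone in the Loewner order on positive
definite matrices because `det (1 + P) ≥ 1` for positive semidefinite `P`.
-/
open scoped MatrixOrder ComplexOrder

namespace Matrix

section RCLike

variable {m 𝕜 : Type*} [RCLike 𝕜]

theorem PosDef.of_le_s7 {A B : Matrix m m 𝕜} (hA : A.PosDef) (hAB : A ≤ B) : B.PosDef := by
  simpa using hA.add_posSemidef hAB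

variable [Fintype m] [DecidableEq m]

theorem PosDef.inv_le_inv {A B : Matrix m m 𝕜} (hA : A.PosDef) (hAB : A ≤ B) : B⁻¹ ≤ A⁻¹ := by
  have hB := hA.of_le_s7 hAB
  have hAu := (isUnit_iff_isUnit_det A).mp hA.isUnit
  have hBu := (isUnit_iff_isUnit_det B).mp hB.isUnit
  set D := B - A
  have hD : D.PosSemidef := hAB
  have inv_sub_inv : A⁻¹ - B⁻¹ = B⁻¹ * (D + Dᴴ * A⁻¹ * D) * B⁻¹ᴴ := by
    rw [hD.isHermitian.eq, hB.inv.isHermitian.eq]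
    calc A⁻¹ - B⁻¹ = B⁻¹ * D * A⁻¹ := by
          rw [Matrix.mul_sub, Matrix.sub_mul, nonsing_inv_mul _ hBu, Matrix.one_mul,
            Matrix.mul_assoc, mul_nonsing_inv _ hAu, Matrix.mul_one]
      _ = B⁻¹ * (D * A⁻¹ * (A + D)) * B⁻¹ := by
          rw [add_sub_cancel]
          simp only [Matrix.mul_assoc, mul_nonsing_inv _ hBu, Matrix.mul_one]
      _ = B⁻¹ * (D + D * A⁻¹ * D) * B⁻¹ := by
          rw [Matrix.mul_add, Matrix.mul_assoc D, nonsing_inv_mul _ hAu, Matrix.mul_one]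
  rw [le_iff, inv_sub_inv]
  exact (hD.add (hA.inv.posSemidef.conjTranspose_mul_mul_same D)).mul_mul_conjTranspose_same _

end RCLike

variable {m : Type*} [Fintype m] [DecidableEq m]

theorem IsHermitian.det_cfc {𝕜 : Type*} [RCLike 𝕜] {A : Matrix m m 𝕜} (hA : A.IsHermitian)
    (f : ℝ → ℝ) :
    (cfc f A).det = ∏ i, (f (hA.eigenvalues i) : 𝕜) := by
  simp [hA.cfc_eq, IsHermitian.cfc, -Unitary.conjStarAlgAut_apply]

theorem PosSemidef.one_le_det_one_add_s7 {P : Matrix m m ℝ} (hP : P.PosSemidef) :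
    1 ≤ (1 + P).det := by
  have h : 1 + P = cfc (fun x : ℝ => 1 + x) P := by
    rw [cfc_const_add (1 : ℝ) (fun x : ℝ => x) P, cfc_id' ℝ P, map_one]
  rw [h, hP.isHermitian.det_cfc]
  exact Finset.one_le_prod fun i _ => by simpa using hP.eigenvalues_nonneg i

theorem PosDef.det_add_eq_det_mul_det_one_add {W P : Matrix m m ℝ} (hW : W.PosDef)
    (hP : 0 ≤ P) :
    (W + P).det = W.det * (1 + CFC.sqrt P * W⁻¹ * CFC.sqrt P).det := by
  conv_lhs => rw [← CFC.sqrt_mul_sqrt_self P]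
  exact det_add_mul _ _ hW.det_pos.ne'.isUnit

theorem PosDef.det_le_det {A B : Matrix m m ℝ} (hA : A.PosDef) (hAB : A ≤ B) : A.det ≤ B.det := by
  have hconj : 0 ≤ CFC.sqrt (B - A) * A⁻¹ * CFC.sqrt (B - A) :=
    (CFC.sqrt_nonneg _).isSelfAdjoint.conjugate_nonneg hA.inv.posSemidef.nonneg
  calc A.det ≤ A.det * (1 + CFC.sqrt (B - A) * A⁻¹ * CFC.sqrt (B - A)).det :=
        le_mul_of_one_le_right hA.det_pos.le (nonneg_iff_posSemidef.mp hconj).one_le_det_one_add_s7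
    _ = B.det := by rw [← hA.det_add_eq_det_mul_det_one_add (sub_nonneg.mpr hAB), add_sub_cancel]

theorem PosDef.det_add_div_det_le {A B P : Matrix m m ℝ} (hA : A.PosDef) (hAB : A ≤ B)
    (hP : 0 ≤ P) :
    (B + P).det / B.det ≤ (A + P).det / A.det := by
  have hB := hA.of_le_s7 hAB
  have hS : IsSelfAdjoint (CFC.sqrt P) := (CFC.sqrt_nonneg P).isSelfAdjoint
  rw [hA.det_add_eq_det_mul_det_one_add hP, hB.det_add_eq_det_mul_det_one_add hP,
    mul_div_cancel_left₀ _ hA.det_pos.ne', mul_div_cancel_left₀ _ hB.det_pos.ne']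
  have hpos : (1 + CFC.sqrt P * B⁻¹ * CFC.sqrt P).PosDef := PosDef.one.add_posSemidef
    (nonneg_iff_posSemidef.mp (hS.conjugate_nonneg hB.inv.posSemidef.nonneg))
  exact hpos.det_le_det
    ((add_le_add_iff_left 1).mpr (hS.conjugate_le_conjugate (hA.inv_le_inv hAB)))

end Matrix

theorem logdet_diminishing_gains_general
    {n : ℕ} (W₁ W₂ Wa : Matrix (Fin n) (Fin n) ℝ)
    (h₁ : W₁.PosDef) (h₁₂ : (W₂ - W₁).PosSemidef)
    (ha : Wa.PosSemidef) :
    Real.log (W₂ + Wa).det - Real.log W₂.det ≤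
      Real.log (W₁ + Wa).det - Real.log W₁.det := by
  have h₂ : W₂.PosDef := h₁.of_le_s7 h₁₂
  rw [← Real.log_div (h₂.add_posSemidef ha).det_pos.ne' h₂.det_pos.ne',
    ← Real.log_div (h₁.add_posSemidef ha).det_pos.ne' h₁.det_pos.ne']
  exact Real.log_le_log (div_pos (h₂.add_posSemidef ha).det_pos h₂.det_pos)
    (h₁.det_add_div_det_le h₁₂ ha.nonneg)

/-- Diminishing-gains inequality for the log determinant: if `W₁ ⪯ W₂` are positive definite
and `W_a` is positive semidefinite, then
`log det(W₂ + W_a) − log det(W₂) ≤ log det(W₁ + W_a) − log det(W₁)`. -/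
theorem logdet_diminishing_gains
    {n : ℕ} (W₁ W₂ Wa : Matrix (Fin n) (Fin n) ℝ)
    (h₁ : W₁.PosDef) (h₂ : W₂.PosDef) (h₁₂ : (W₂ - W₁).PosSemidef)
    (ha : Wa.PosSemidef) :
    Real.log (W₂ + Wa).det - Real.log W₂.det ≤
      Real.log (W₁ + Wa).det - Real.log W₁.det :=
  logdet_diminishing_gains_general W₁ W₂ Wa h₁ h₁₂ ha
end

section
/- Let V be a finite set, let W₀ be an n×n real symmetric positive definite matrix, and for each s ∈ V let W_s be an n×n real symmetric positive semidefinite matrix. For S ⊆ V define W_S = W₀ + Σ_{s∈S} W_s. Then the set function g : 2^V → ℝ defined by g(S) = (1/n) log det(W_S) = log of the n-th root of det(W_S) is submodular and monotone increasing. -/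
/-!
With `T = √W`, the matrix determinant lemma gives
`log det (Z + W) - log det Z = log det (1 + T Z⁻¹ T)`.
Inversion is antitone and `det` is monotone in the Loewner order on positive definite matrices,
so this marginal gain of `W` decreases as `Z` grows. Applied to the Gramians `W_A ≤ W_B` of
actuator sets `A ⊆ B` this is submodularity; monotonicity of `det` gives monotonicity.
-/

open Matrix
open scoped MatrixOrder ComplexOrder

namespace Matrix

variable {n 𝕜 : Type*} [RCLike 𝕜]

lemma PosDef.of_le_s8 {X Y : Matrix n n 𝕜} (hX : X.PosDef) (hXY : X ≤ Y) : Y.PosDef := by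
  simpa using hX.add_posSemidef (le_iff.mp hXY)

variable [Fintype n] [DecidableEq n]

/- The Schur complements of `[[Y, 1], [1, X⁻¹]]` with respect to `X⁻¹` and to `Y` are
`Y - X` and `X⁻¹ - Y⁻¹`, so positivity of one is positivity of the other. -/
lemma inv_le_inv_of_le {X Y : Matrix n n 𝕜} (hX : X.PosDef) (hXY : X ≤ Y) : Y⁻¹ ≤ X⁻¹ := by
  have hY := hX.of_le_s8 hXY
  let _ := hX.inv.isUnit.invertible
  let _ := hY.isUnit.invertible
  have hblocks : (fromBlocks Y 1 1ᴴ X⁻¹).PosSemidef := by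
    refine (PosDef.fromBlocks₂₂ Y 1 hX.inv).mpr ?_
    rw [conjTranspose_one, Matrix.mul_one, Matrix.one_mul,
      nonsing_inv_nonsing_inv X ((isUnit_iff_isUnit_det X).mp hX.isUnit)]
    exact le_iff.mp hXY
  simpa [le_iff] using (PosDef.fromBlocks₁₁ 1 X⁻¹ hY).mp hblocks

lemma det_add_eq_det_mul_det_one_add_sqrt {A W : Matrix n n 𝕜} (hA : IsUnit A.det) (hW : 0 ≤ W) :
    (A + W).det = A.det * (1 + CFC.sqrt W * A⁻¹ * CFC.sqrt W).det := by
  conv_lhs => rw [← CFC.sqrt_mul_sqrt_self W hW]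
  exact det_add_mul _ _ hA

lemma one_le_det_of_one_le {A : Matrix n n ℝ} (hA : 1 ≤ A) : 1 ≤ A.det := by
  have hsa : IsSelfAdjoint A := by
    simpa using (IsSelfAdjoint.one _).add (IsSelfAdjoint.of_nonneg (sub_nonneg.mpr hA))
  have hH : A.IsHermitian := hsa
  rw [hH.det_eq_prod_eigenvalues]
  refine Finset.one_le_prod fun i _ => ?_
  simpa using (CFC.one_le_iff A).mp hA _ (hH.eigenvalues_mem_spectrum_real i)

lemma det_le_det_of_le {A B : Matrix n n ℝ} (hA : A.PosDef) (hAB : A ≤ B) : A.det ≤ B.det := by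
  have hBA : 0 ≤ B - A := sub_nonneg.mpr hAB
  have hone : 1 ≤ 1 + CFC.sqrt (B - A) * A⁻¹ * CFC.sqrt (B - A) :=
    le_add_of_nonneg_right <|
      conjugate_nonneg_of_nonneg hA.inv.posSemidef.nonneg (CFC.sqrt_nonneg _)
  calc A.det = A.det * 1 := (mul_one _).symm
    _ ≤ A.det * (1 + CFC.sqrt (B - A) * A⁻¹ * CFC.sqrt (B - A)).det :=
      mul_le_mul_of_nonneg_left (one_le_det_of_one_le hone) hA.det_pos.le
    _ = B.det := by
      rw [← det_add_eq_det_mul_det_one_add_sqrt hA.det_pos.ne'.isUnit hBA, add_sub_cancel]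

lemma log_det_add_sub_log_det_le_of_le {X Y W : Matrix n n ℝ} (hX : X.PosDef) (hXY : X ≤ Y)
    (hW : 0 ≤ W) :
    Real.log (Y + W).det - Real.log Y.det ≤ Real.log (X + W).det - Real.log X.det := by
  have hY := hX.of_le_s8 hXY
  set T := CFC.sqrt W
  have gain_posDef (Z : Matrix n n ℝ) (hZ : Z.PosDef) : (1 + T * Z⁻¹ * T).PosDef :=
    PosDef.one.add_posSemidef (nonneg_iff_posSemidef.mp
      (conjugate_nonneg_of_nonneg hZ.inv.posSemidef.nonneg (CFC.sqrt_nonneg W)))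
  have log_gain (Z : Matrix n n ℝ) (hZ : Z.PosDef) :
      Real.log (Z + W).det - Real.log Z.det = Real.log (1 + T * Z⁻¹ * T).det := by
    rw [det_add_eq_det_mul_det_one_add_sqrt hZ.det_pos.ne'.isUnit hW,
      Real.log_mul hZ.det_pos.ne' (gain_posDef Z hZ).det_pos.ne', add_sub_cancel_left]
  have gain_le : 1 + T * Y⁻¹ * T ≤ 1 + T * X⁻¹ * T :=
    add_le_add_right (conjugate_le_conjugate_of_nonneg (inv_le_inv_of_le hX hXY)
      (CFC.sqrt_nonneg W)) 1
  rw [log_gain X hX, log_gain Y hY]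
  exact Real.log_le_log (gain_posDef Y hY).det_pos (det_le_det_of_le (gain_posDef Y hY) gain_le)

end Matrix

theorem logdet_nth_root_gramian_submodular_monotone_general
    {V : Type*} [DecidableEq V] {n : ℕ}
    (W₀ : Matrix (Fin n) (Fin n) ℝ) (hW₀ : W₀.PosDef)
    (W : V → Matrix (Fin n) (Fin n) ℝ) (hW : ∀ s : V, (W s).PosSemidef)
    (g : Finset V → ℝ)
    (hg : ∀ S : Finset V, g S = (1 / (n : ℝ)) * Real.log (W₀ + ∑ s ∈ S, W s).det) :
    (∀ A B : Finset V, A ⊆ B → ∀ s : V, s ∉ B →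
      g (insert s A) - g A ≥ g (insert s B) - g B) ∧
    (∀ A B : Finset V, A ⊆ B → g A ≤ g B) := by
  have gramian_mono {A B : Finset V} (hAB : A ⊆ B) : W₀ + ∑ s ∈ A, W s ≤ W₀ + ∑ s ∈ B, W s :=
    add_le_add_right (Finset.sum_le_sum_of_subset_of_nonneg hAB fun s _ _ => (hW s).nonneg) W₀
  have gramian_posDef (S : Finset V) : (W₀ + ∑ s ∈ S, W s).PosDef :=
    hW₀.of_le_s8 (by simpa using gramian_mono (Finset.empty_subset S))
  have gramian_insert {S : Finset V} {s : V} (hs : s ∉ S) :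
      W₀ + ∑ t ∈ insert s S, W t = W₀ + ∑ t ∈ S, W t + W s := by
    rw [Finset.sum_insert hs]; abel
  have hn : 0 ≤ 1 / (n : ℝ) := by positivity
  refine ⟨fun A B hAB s hsB => ?_, fun A B hAB => ?_⟩
  · simp only [hg, gramian_insert hsB, gramian_insert fun hsA => hsB (hAB hsA), ← mul_sub]
    exact mul_le_mul_of_nonneg_left (log_det_add_sub_log_det_le_of_le (gramian_posDef A)
      (gramian_mono hAB) (hW s).nonneg) hn
  · rw [hg, hg]
    exact mul_le_mul_of_nonneg_left (Real.log_le_log (gramian_posDef A).det_pos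
      (det_le_det_of_le (gramian_posDef A) (gramian_mono hAB))) hn

/-- The log of the n-th root of the determinant of the controllability Gramian,
`g(S) = (1/n) log det(W₀ + ∑_{s ∈ S} W_s)`, is a submodular and monotone increasing
set function of the actuator set `S`. -/
theorem logdet_nth_root_gramian_submodular_monotone
    {V : Type*} [Fintype V] [DecidableEq V] {n : ℕ}
    (W₀ : Matrix (Fin n) (Fin n) ℝ) (hW₀ : W₀.PosDef)
    (W : V → Matrix (Fin n) (Fin n) ℝ) (hW : ∀ s : V, (W s).PosSemidef)
    (g : Finset V → ℝ)
    (hg : ∀ S : Finset V, g S = (1 / (n : ℝ)) * Real.log (W₀ + ∑ s ∈ S, W s).det) :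
    (∀ A B : Finset V, A ⊆ B → ∀ s : V, s ∉ B →
      g (insert s A) - g A ≥ g (insert s B) - g B) ∧
    (∀ A B : Finset V, A ⊆ B → g A ≤ g B) :=
  logdet_nth_root_gramian_submodular_monotone_general W₀ hW₀ W hW g hg
end

section
/- Let V be a finite set and for each s ∈ V let W_s be an n×n real symmetric positive semidefinite matrix. For S ⊆ V define W_S = Σ_{s∈S} W_s. Then the set function f : 2^V → ℝ defined by f(S) = rank(W_S) is submodular and monotone increasing. -/
/-!
For positive semidefinite `W_s` one has `x* W_S x = ∑ x* W_s x` with nonnegative terms, so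
`ker W_S = ⋂_{s ∈ S} ker W_s`, and `rank W_S = n - dim K_S` with `K_S` that intersection.
Adding `s` lowers `dim K_S` by `dim K_S - dim (ker W_s ∩ K_S) = dim (ker W_s + K_S) - dim ker W_s`,
which can only shrink as `S` grows, since `K_S` shrinks.
-/

open Matrix Module

theorem Submodule.finrank_add_finrank_inf_le_of_le {K E : Type*} [DivisionRing K]
    [AddCommGroup E] [Module K E] [FiniteDimensional K E] (X : Submodule K E)
    {U U' : Submodule K E} (h : U ≤ U') :
    finrank K U + finrank K ↥(X ⊓ U') ≤ finrank K U' + finrank K ↥(X ⊓ U) := by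
  have hU := Submodule.finrank_sup_add_finrank_inf_eq X U
  have hU' := Submodule.finrank_sup_add_finrank_inf_eq X U'
  have hsup := Submodule.finrank_mono (sup_le_sup_left h X)
  omega

namespace Matrix

theorem rank_add_finrank_ker_mulVecLin {R m n : Type*} [Field R] [Fintype n]
    (A : Matrix m n R) :
    A.rank + finrank R (LinearMap.ker A.mulVecLin) = Fintype.card n := by
  rw [rank, LinearMap.finrank_range_add_finrank_ker, finrank_fintype_fun_eq_card]

open scoped ComplexOrder

variable {𝕜 n : Type*} [RCLike 𝕜] [Fintype n]

theorem PosSemidef.ker_mulVecLin_add {A B : Matrix n n 𝕜} (hA : A.PosSemidef)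
    (hB : B.PosSemidef) :
    LinearMap.ker (A + B).mulVecLin = LinearMap.ker A.mulVecLin ⊓ LinearMap.ker B.mulVecLin := by
  ext x
  simp only [Submodule.mem_inf, LinearMap.mem_ker, mulVecLin_apply]
  rw [← (hA.add hB).dotProduct_mulVec_zero_iff, ← hA.dotProduct_mulVec_zero_iff,
    ← hB.dotProduct_mulVec_zero_iff, add_mulVec, dotProduct_add]
  exact add_eq_zero_iff_of_nonneg (hA.dotProduct_mulVec_nonneg x) (hB.dotProduct_mulVec_nonneg x)

theorem PosSemidef.ker_mulVecLin_sum {ι : Type*} {W : ι → Matrix n n 𝕜}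
    (hW : ∀ i, (W i).PosSemidef) (S : Finset ι) :
    LinearMap.ker (∑ i ∈ S, W i).mulVecLin = ⨅ i ∈ S, LinearMap.ker (W i).mulVecLin := by
  classical
  induction S using Finset.induction_on with
  | empty => simp
  | insert i S hi ih =>
    rw [Finset.sum_insert hi, (hW i).ker_mulVecLin_add (posSemidef_sum S fun j _ => hW j), ih,
      Finset.iInf_insert]

end Matrix

theorem rank_gramian_submodular_monotone_general
    {V : Type*} [DecidableEq V] {n : ℕ}
    (W : V → Matrix (Fin n) (Fin n) ℝ) (hW : ∀ s : V, (W s).PosSemidef)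
    (f : Finset V → ℝ)
    (hf : ∀ S : Finset V, f S = ((∑ s ∈ S, W s).rank : ℝ)) :
    (∀ A B : Finset V, A ⊆ B → ∀ s : V, s ∉ B →
      f (insert s A) - f A ≥ f (insert s B) - f B) ∧
    (∀ A B : Finset V, A ⊆ B → f A ≤ f B) := by
  let K (S : Finset V) : Submodule ℝ (Fin n → ℝ) := ⨅ s ∈ S, LinearMap.ker (W s).mulVecLin
  have hfK (S : Finset V) : f S + finrank ℝ (K S) = n := by
    rw [hf, show K S = _ from (PosSemidef.ker_mulVecLin_sum hW S).symm]
    exact_mod_cast (∑ s ∈ S, W s).rank_add_finrank_ker_mulVecLin.trans (Fintype.card_fin n)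
  have hK {A B : Finset V} (hAB : A ⊆ B) : K B ≤ K A := biInf_mono hAB
  refine ⟨fun A B hAB s _ => ?_, fun A B hAB => ?_⟩
  · have hdim : finrank ℝ (K B) + finrank ℝ (K (insert s A)) ≤
        finrank ℝ (K A) + finrank ℝ (K (insert s B)) := by
      rw [show K (insert s A) = _ from Finset.iInf_insert s A _,
        show K (insert s B) = _ from Finset.iInf_insert s B _]
      exact Submodule.finrank_add_finrank_inf_le_of_le (LinearMap.ker (W s).mulVecLin) (hK hAB)
    have hdimℝ : (finrank ℝ (K B) : ℝ) + finrank ℝ (K (insert s A)) ≤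
        finrank ℝ (K A) + finrank ℝ (K (insert s B)) := by exact_mod_cast hdim
    linarith [hfK A, hfK B, hfK (insert s A), hfK (insert s B)]
  · have hdim : (finrank ℝ (K B) : ℝ) ≤ finrank ℝ (K A) := by
      exact_mod_cast Submodule.finrank_mono (hK hAB)
    linarith [hfK A, hfK B]

/-- The rank of the controllability Gramian `W_S = ∑_{s ∈ S} W_s` is a submodular and
monotone increasing set function of the actuator set `S`. -/
theorem rank_gramian_submodular_monotone
    {V : Type*} [Fintype V] [DecidableEq V] {n : ℕ}
    (W : V → Matrix (Fin n) (Fin n) ℝ) (hW : ∀ s : V, (W s).PosSemidef)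
    (f : Finset V → ℝ)
    (hf : ∀ S : Finset V, f S = ((∑ s ∈ S, W s).rank : ℝ)) :
    (∀ A B : Finset V, A ⊆ B → ∀ s : V, s ∉ B →
      f (insert s A) - f A ≥ f (insert s B) - f B) ∧
    (∀ A B : Finset V, A ⊆ B → f A ≤ f B) :=
  rank_gramian_submodular_monotone_general W hW f hf
end

section
/- There exist 3×3 real symmetric positive semidefinite matrices W₁, W₂, W₃ such that λ_min(W₂ + W₃) − λ_min(W₂) < λ_min(W₁ + W₂ + W₃) − λ_min(W₁ + W₂), where λ_min denotes the smallest eigenvalue. Consequently, the set function S ↦ λ_min(Σ_{s∈S} W_s) on subsets of a finite family of positive semidefinite matrices is not submodular in general: the diminishing-returns inequality for adding the element associated with W₃ fails with A = {2} ⊆ B = {1,2}. -/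
open Matrix

/-!
Take the three coordinate actuators `W_k = e_k e_kᵀ`. Any sum of fewer than three of them is
singular, so `λ_min` vanishes on `W₂`, `W₂ + W₃` and `W₁ + W₂`, whereas `W₁ + W₂ + W₃ = 1`
has `λ_min = 1`: adding `W₃` gains nothing for `{2}` but gains `1` for `{1, 2}`.
-/

/-- The smallest eigenvalue of a real symmetric matrix. -/
noncomputable def lambdaMin {n : ℕ} (W : Matrix (Fin n) (Fin n) ℝ)
    (hW : W.IsHermitian) : ℝ :=
  ⨅ i, hW.eigenvalues i

lemma lambdaMin_eq_sInf_spectrum {n : ℕ} {W : Matrix (Fin n) (Fin n) ℝ} (hW : W.IsHermitian) :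
    lambdaMin W hW = sInf (spectrum ℝ W) := by
  rw [hW.spectrum_real_eq_range_eigenvalues, lambdaMin, sInf_range]

/-- The smallest eigenvalue of the Gramian is not a submodular set function in general:
there exist 3×3 positive semidefinite matrices `W₁, W₂, W₃` for which the
diminishing-returns inequality fails, i.e.
`λ_min(W₂ + W₃) − λ_min(W₂) < λ_min(W₁ + W₂ + W₃) − λ_min(W₁ + W₂)`. -/
theorem lambdaMin_not_submodular :
    ∃ W₁ W₂ W₃ : Matrix (Fin 3) (Fin 3) ℝ,
      ∃ (h₁ : W₁.PosSemidef) (h₂ : W₂.PosSemidef) (h₃ : W₃.PosSemidef),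
        lambdaMin (W₂ + W₃) (h₂.add h₃).1 - lambdaMin W₂ h₂.1 <
          lambdaMin (W₁ + W₂ + W₃) ((h₁.add h₂).add h₃).1 -
            lambdaMin (W₁ + W₂) (h₁.add h₂).1 := by
  have psd_diagonal {a b c : ℝ} (ha : 0 ≤ a) (hb : 0 ≤ b) (hc : 0 ≤ c) :
      (diagonal ![a, b, c]).PosSemidef :=
    posSemidef_diagonal_iff.mpr fun i => by fin_cases i <;> assumption
  refine ⟨diagonal ![1, 0, 0], diagonal ![0, 1, 0], diagonal ![0, 0, 1],
    psd_diagonal zero_le_one le_rfl le_rfl, psd_diagonal le_rfl zero_le_one le_rfl,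
    psd_diagonal le_rfl le_rfl zero_le_one, ?_⟩
  simp only [lambdaMin_eq_sInf_spectrum, diagonal_add, spectrum_diagonal, ← Pi.add_def,
    cons_add_cons, empty_add_empty, range_cons, range_empty]
  norm_num
end
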